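/- arXiv:2207.12132 — 3 statements merged into one kernel-verified Lean document; each statement's English description precedes it below -/
import Mathlib

section
/- Let Φ : ℝ^{n_x} → ℝ^{n_f} be continuously differentiable with Jacobian ∂Φ/∂x, let f_c : ℝ^{n_x} → ℝ^{n_x} be continuous, let g_c : ℝ^{n_x} × ℝ^{n_u} → ℝ^{n_x} be continuous, continuously differentiable in u, with g_c(x,0) = 0, and let 𝕌 ⊆ ℝ^{n_u} be convex with 0 ∈ 𝕌. Suppose there is A ∈ ℝ^{n_f × n_f} with (∂Φ/∂x)(x) f_c(x) = A Φ(x) for all x. If x : ℝ → ℝ^{n_x} is differentiable, satisfies ẋ(t) = f_c(x(t)) + g_c(x(t), u(t)), and u(t) ∈ 𝕌 for all t, then d/dt Φ(x(t)) = A Φ(x(t)) + B(x(t), u(t))·u(t), where B(x,u) = ∫₀¹ (∂𝓑/∂u)(x, λu) dλ with 𝓑(x,u) = (∂Φ/∂x)(x) g_c(x,u). -/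
open Matrix

/-! Since `g_c(x, 0) = 0`, the fundamental theorem of calculus along the ray `λ ↦ λ u` gives
`g_c(x, u) = (∫₀¹ ∂g_c/∂u (x, λu) dλ) u`. Multiplying by `∂Φ/∂x (x)` and adding the Koopman
identity for `f_c` turns the chain rule for `Φ ∘ x` into the factorized form. -/

theorem intervalIntegral_pi_apply {ι E : Type*} [Fintype ι] [NormedAddCommGroup E]
    [NormedSpace ℝ E] [CompleteSpace E] {f : ℝ → ι → E} {a b : ℝ}
    (hf : IntervalIntegrable f MeasureTheory.volume a b) (i : ι) :
    (∫ s in a..b, f s) i = ∫ s in a..b, f s i :=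
  ((ContinuousLinearMap.proj (R := ℝ) (φ := fun _ : ι => E) i).intervalIntegral_comp_comm hf).symm

theorem Matrix.of_intervalIntegral_mulVec {m n : Type*} [Fintype m] [Fintype n]
    {M : ℝ → Matrix m n ℝ} (hM : Continuous M) (a b : ℝ) (v : n → ℝ) :
    (of fun i j => ∫ s in a..b, M s i j) *ᵥ v = ∫ s in a..b, M s *ᵥ v := by
  ext i
  rw [intervalIntegral_pi_apply ((hM.matrix_mulVec continuous_const).intervalIntegrable a b)]
  simp only [mulVec, dotProduct, of_apply]
  rw [intervalIntegral.integral_finsetSum (f := fun j s => M s i j * v j) fun j _ =>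
    ((hM.matrix_elem i j).mul continuous_const).intervalIntegrable a b]
  simp only [intervalIntegral.integral_mul_const]

theorem sub_eq_intervalIntegral_fderiv_smul {E F : Type*} [NormedAddCommGroup E]
    [NormedSpace ℝ E] [NormedAddCommGroup F] [NormedSpace ℝ F] [CompleteSpace F]
    {g : E → F} {g' : E → E →L[ℝ] F} {v : E}
    (hg : ∀ s ∈ Set.uIcc (0 : ℝ) 1, HasFDerivAt g (g' (s • v)) (s • v))
    (hg' : Continuous fun s : ℝ => g' (s • v) v) :
    g v - g 0 = ∫ s in (0 : ℝ)..1, g' (s • v) v := by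
  have hderiv : ∀ s ∈ Set.uIcc (0 : ℝ) 1,
      HasDerivAt (fun s : ℝ => g (s • v)) (g' (s • v) v) s := fun s hs => by
    simpa [Function.comp_def] using (hg s hs).comp_hasDerivAt s ((hasDerivAt_id s).smul_const v)
  rw [intervalIntegral.integral_eq_sub_of_hasDerivAt hderiv (hg'.intervalIntegrable 0 1)]
  simp

theorem koopman_ct_general_factorized_general
    {nx nf nu : ℕ}
    (Φ : (Fin nx → ℝ) → (Fin nf → ℝ))
    (DΦ : (Fin nx → ℝ) → Matrix (Fin nf) (Fin nx) ℝ)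
    (hΦ : ∀ x : Fin nx → ℝ,
      HasFDerivAt Φ (LinearMap.toContinuousLinearMap (DΦ x).mulVecLin) x)
    (fc : (Fin nx → ℝ) → (Fin nx → ℝ))
    (gc : (Fin nx → ℝ) → (Fin nu → ℝ) → (Fin nx → ℝ))
    (Dg : (Fin nx → ℝ) → (Fin nu → ℝ) → Matrix (Fin nx) (Fin nu) ℝ)
    (hg : ∀ (x : Fin nx → ℝ) (u : Fin nu → ℝ),
      HasFDerivAt (fun v => gc x v) (LinearMap.toContinuousLinearMap (Dg x u).mulVecLin) u)
    (hDg : ∀ x : Fin nx → ℝ, Continuous (Dg x))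
    (hg0 : ∀ x : Fin nx → ℝ, gc x 0 = 0)
    (A : Matrix (Fin nf) (Fin nf) ℝ)
    (hA : ∀ x : Fin nx → ℝ, (DΦ x).mulVec (fc x) = A.mulVec (Φ x))
    (u : ℝ → (Fin nu → ℝ))
    (x : ℝ → (Fin nx → ℝ))
    (hx : ∀ t : ℝ, HasDerivAt x (fc (x t) + gc (x t) (u t)) t) :
    ∀ t : ℝ, HasDerivAt (fun τ => Φ (x τ))
      (A.mulVec (Φ (x t)) +
        (Matrix.of fun i j =>
          ∫ s in (0:ℝ)..1, (DΦ (x t) * Dg (x t) (s • u t)) i j).mulVec (u t)) t := by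
  intro t
  have hDg_ray : Continuous fun s : ℝ => Dg (x t) (s • u t) := by fun_prop
  have hgc : gc (x t) (u t) = ∫ s in (0 : ℝ)..1, Dg (x t) (s • u t) *ᵥ u t := by
    simpa [hg0] using sub_eq_intervalIntegral_fderiv_smul
      (g' := fun w => (Dg (x t) w).mulVecLin.toContinuousLinearMap)
      (fun s _ => hg (x t) (s • u t)) (hDg_ray.matrix_mulVec continuous_const)
  have hB : (of fun i j => ∫ s in (0 : ℝ)..1, (DΦ (x t) * Dg (x t) (s • u t)) i j) *ᵥ u t
      = DΦ (x t) *ᵥ gc (x t) (u t) := by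
    rw [of_intervalIntegral_mulVec (continuous_const.matrix_mul hDg_ray), hgc]
    simp only [← mulVec_mulVec]
    exact (DΦ (x t)).mulVecLin.toContinuousLinearMap.intervalIntegral_comp_comm
      ((hDg_ray.matrix_mulVec continuous_const).intervalIntegrable 0 1)
  rw [hB, ← hA, ← mulVec_add]
  simpa [Function.comp_def] using (hΦ (x t)).comp_hasDerivAt t (hx t)

/-- Exact factorized (LPV) Koopman form of a continuous-time
nonlinear system: along trajectories of `ẋ = f_c(x) + g_c(x,u)` with `u(t) ∈ 𝕌`
(convex, `0 ∈ 𝕌`), `g_c(x,0) = 0`, `g_c` continuously differentiable in `u`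
(partial Jacobian `Dg`), and Koopman-invariant observables `Φ`, we have
`d/dt Φ(x(t)) = A Φ(x(t)) + B(x(t),u(t)) u(t)` where
`B(x,u) = ∫₀¹ (∂𝓑/∂u)(x, λu) dλ` and `(∂𝓑/∂u)(x,u) = (∂Φ/∂x)(x) · (∂g_c/∂u)(x,u)`. -/
theorem koopman_ct_general_factorized
    {nx nf nu : ℕ}
    (U : Set (Fin nu → ℝ)) (hU : Convex ℝ U) (hU0 : (0 : Fin nu → ℝ) ∈ U)
    (Φ : (Fin nx → ℝ) → (Fin nf → ℝ))
    (DΦ : (Fin nx → ℝ) → Matrix (Fin nf) (Fin nx) ℝ)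
    (hΦ : ∀ x : Fin nx → ℝ,
      HasFDerivAt Φ (LinearMap.toContinuousLinearMap (DΦ x).mulVecLin) x)
    (hDΦ : Continuous DΦ)
    (fc : (Fin nx → ℝ) → (Fin nx → ℝ)) (hfc : Continuous fc)
    (gc : (Fin nx → ℝ) → (Fin nu → ℝ) → (Fin nx → ℝ))
    (hgc : Continuous fun p : (Fin nx → ℝ) × (Fin nu → ℝ) => gc p.1 p.2)
    (Dg : (Fin nx → ℝ) → (Fin nu → ℝ) → Matrix (Fin nx) (Fin nu) ℝ)
    (hg : ∀ (x : Fin nx → ℝ) (u : Fin nu → ℝ),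
      HasFDerivAt (fun v => gc x v) (LinearMap.toContinuousLinearMap (Dg x u).mulVecLin) u)
    (hDg : ∀ x : Fin nx → ℝ, Continuous (Dg x))
    (hg0 : ∀ x : Fin nx → ℝ, gc x 0 = 0)
    (A : Matrix (Fin nf) (Fin nf) ℝ)
    (hA : ∀ x : Fin nx → ℝ, (DΦ x).mulVec (fc x) = A.mulVec (Φ x))
    (u : ℝ → (Fin nu → ℝ)) (hu : ∀ t : ℝ, u t ∈ U)
    (x : ℝ → (Fin nx → ℝ))
    (hx : ∀ t : ℝ, HasDerivAt x (fc (x t) + gc (x t) (u t)) t) :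
    ∀ t : ℝ, HasDerivAt (fun τ => Φ (x τ))
      (A.mulVec (Φ (x t)) +
        (Matrix.of fun i j =>
          ∫ s in (0:ℝ)..1, (DΦ (x t) * Dg (x t) (s • u t)) i j).mulVec (u t)) t :=
  koopman_ct_general_factorized_general Φ DΦ hΦ fc gc Dg hg hDg hg0 A hA u x hx
end

section
/- Let 𝕏 ⊆ ℝ^{n_x} be a convex set, let Φ : ℝ^{n_x} → ℝ^{n_f} be continuously differentiable with Jacobian ∂Φ/∂x, let f : ℝ^{n_x} → ℝ^{n_x} and g : ℝ^{n_x} × ℝ^{n_u} → ℝ^{n_x} be such that f(x) ∈ 𝕏 and f(x) + g(x,u) ∈ 𝕏 for all x ∈ 𝕏, u ∈ 𝕌, and suppose there is A ∈ ℝ^{n_f × n_f} with Φ(f(x)) = A Φ(x) for all x ∈ 𝕏. Then for every x ∈ 𝕏 and u ∈ 𝕌, Φ(f(x) + g(x,u)) = A Φ(x) + 𝓑(x,u), where 𝓑(x,u) = (∫₀¹ (∂Φ/∂x)(f(x) + λ g(x,u)) dλ)·g(x,u); i.e., the discrete-time system x_{k+1} = f(x_k) + g(x_k,u_k) admits the exact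 finite-dimensional lifted form Φ(x_{k+1}) = A Φ(x_k) + 𝓑(x_k,u_k). -/
/-!
Since `Φ ∘ f = A Φ` on `X`, only the increment `Φ (f x + g x u) - Φ (f x)` remains. By the
fundamental theorem of calculus along the segment from `f x` to `f x + g x u` it is the integral
of the Jacobian applied to `g x u`, and applying a fixed vector commutes with integration.
-/

open Matrix MeasureTheory

theorem image_add_eq_add_intervalIntegral {E F : Type*} [NormedAddCommGroup E] [NormedSpace ℝ E]
    [NormedAddCommGroup F] [NormedSpace ℝ F] [CompleteSpace F]
    {Φ : E → F} {Φ' : E → E →L[ℝ] F} (hΦ : ∀ x, HasFDerivAt Φ (Φ' x) x) (a v : E)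
    (hΦ' : Continuous fun t : ℝ => Φ' (a + t • v) v) :
    Φ (a + v) = Φ a + ∫ t in (0 : ℝ)..1, Φ' (a + t • v) v := by
  have hderiv : ∀ t ∈ Set.uIcc (0 : ℝ) 1,
      HasDerivAt (fun s : ℝ => Φ (a + s • v)) (Φ' (a + t • v) v) t := fun t _ =>
    (hΦ _).comp_hasDerivAt t (((hasDerivAt_id t).smul_const v).const_add a |>.congr_deriv
      (one_smul ℝ v))
  rw [intervalIntegral.integral_eq_sub_of_hasDerivAt hderiv (hΦ'.intervalIntegrable 0 1)]
  simp

theorem Matrix.intervalIntegral_mulVec {m n : Type*} [Fintype m] [Fintype n]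
    {M : ℝ → Matrix m n ℝ} (hM : Continuous M) (a b : ℝ) (v : n → ℝ) :
    ∫ t in a..b, M t *ᵥ v = (of fun i j => ∫ t in a..b, M t i j) *ᵥ v := by
  ext i
  have hcoord : (∫ t in a..b, M t *ᵥ v) i = ∫ t in a..b, (M t *ᵥ v) i :=
    ((ContinuousLinearMap.proj (R := ℝ) (φ := fun _ : m => ℝ) i).intervalIntegral_comp_comm
      ((hM.matrix_mulVec continuous_const).intervalIntegrable a b)).symm
  have hint (j : n) : IntervalIntegrable (fun t => M t i j * v j) volume a b :=
    ((hM.matrix_elem i j).mul continuous_const).intervalIntegrable a b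
  simp only [hcoord, mulVec, dotProduct, of_apply,
    intervalIntegral.integral_finsetSum fun j _ => hint j, intervalIntegral.integral_mul_const]

theorem koopman_dt_general_general
    {nx nf nu : ℕ}
    (X : Set (Fin nx → ℝ))
    (U : Set (Fin nu → ℝ))
    (Φ : (Fin nx → ℝ) → (Fin nf → ℝ))
    (DΦ : (Fin nx → ℝ) → Matrix (Fin nf) (Fin nx) ℝ)
    (hΦ : ∀ x : Fin nx → ℝ,
      HasFDerivAt Φ (LinearMap.toContinuousLinearMap (DΦ x).mulVecLin) x)
    (hDΦ : Continuous DΦ)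
    (f : (Fin nx → ℝ) → (Fin nx → ℝ))
    (g : (Fin nx → ℝ) → (Fin nu → ℝ) → (Fin nx → ℝ))
    (A : Matrix (Fin nf) (Fin nf) ℝ)
    (hA : ∀ x ∈ X, Φ (f x) = A.mulVec (Φ x)) :
    ∀ x ∈ X, ∀ u ∈ U,
      Φ (f x + g x u) =
        A.mulVec (Φ x) +
          (Matrix.of fun i j =>
            ∫ s in (0:ℝ)..1, DΦ (f x + s • g x u) i j).mulVec (g x u) := by
  intro x hx u _
  have hDΦ_segment : Continuous fun s : ℝ => DΦ (f x + s • g x u) := hDΦ.comp (by fun_prop)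
  rw [image_add_eq_add_intervalIntegral hΦ _ _ (hDΦ_segment.matrix_mulVec continuous_const), hA x hx]
  exact congrArg _ (intervalIntegral_mulVec hDΦ_segment 0 1 (g x u))

/-- Exact finite-dimensional lifted form of a discrete-time
nonlinear system `x_{k+1} = f(x_k) + g(x_k,u_k)` on a convex forward-invariant
set `𝕏`, with Koopman-invariant observables `Φ(f(x)) = A Φ(x)`:
`Φ(f(x) + g(x,u)) = A Φ(x) + 𝓑(x,u)` where
`𝓑(x,u) = (∫₀¹ (∂Φ/∂x)(f(x) + λ g(x,u)) dλ) g(x,u)`. -/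
theorem koopman_dt_general
    {nx nf nu : ℕ}
    (X : Set (Fin nx → ℝ)) (hX : Convex ℝ X)
    (U : Set (Fin nu → ℝ))
    (Φ : (Fin nx → ℝ) → (Fin nf → ℝ))
    (DΦ : (Fin nx → ℝ) → Matrix (Fin nf) (Fin nx) ℝ)
    (hΦ : ∀ x : Fin nx → ℝ,
      HasFDerivAt Φ (LinearMap.toContinuousLinearMap (DΦ x).mulVecLin) x)
    (hDΦ : Continuous DΦ)
    (f : (Fin nx → ℝ) → (Fin nx → ℝ))
    (g : (Fin nx → ℝ) → (Fin nu → ℝ) → (Fin nx → ℝ))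
    (hf : ∀ x ∈ X, f x ∈ X)
    (hfg : ∀ x ∈ X, ∀ u ∈ U, f x + g x u ∈ X)
    (A : Matrix (Fin nf) (Fin nf) ℝ)
    (hA : ∀ x ∈ X, Φ (f x) = A.mulVec (Φ x)) :
    ∀ x ∈ X, ∀ u ∈ U,
      Φ (f x + g x u) =
        A.mulVec (Φ x) +
          (Matrix.of fun i j =>
            ∫ s in (0:ℝ)..1, DΦ (f x + s • g x u) i j).mulVec (g x u) :=
  koopman_dt_general_general X U Φ DΦ hΦ hDΦ f g A hA
end

section
/- Let 𝕏 ⊆ ℝ^{n_x} be a convex set, let Φ : ℝ^{n_x} → ℝ^{n_f} be continuously differentiable with Jacobian ∂Φ/∂x, let f : ℝ^{n_x} → ℝ^{n_x} and g : ℝ^{n_x} → ℝ^{n_x × n_u} be such that f(x) ∈ 𝕏 and f(x) + g(x)u ∈ 𝕏 for all x ∈ 𝕏, u ∈ 𝕌, and suppose there is A ∈ ℝ^{n_f × n_f} with Φ(f(x)) = A Φ(x) for all x ∈ 𝕏. Then for every x ∈ 𝕏 and u ∈ 𝕌, the discrete-time control-affine system x_{k+1} = f(x_k) + g(x_k)u_k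 has the exact factorized lifted form Φ(f(x) + g(x)u) = A Φ(x) + B(x,u)·u, where B(x,u) = (∫₀¹ (∂Φ/∂x)(f(x) + λ g(x)u) dλ)·g(x); in particular, unlike the continuous-time control-affine case, the input matrix B also depends on the input u. -/
open Matrix

/-!
Along the segment `s ↦ f x + s • g x u` the fundamental theorem of calculus gives
`Φ (f x + g x u) = Φ (f x) + (∫₀¹ ∂Φ/∂x (f x + s • g x u) ds) g x u`, and the Koopman
invariance `Φ ∘ f = A Φ` rewrites the first term.  The Jacobian is averaged over a segment
whose length depends on `u`, which is why the input matrix depends on `u`.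
-/

variable {m n : Type*} [Fintype n]

noncomputable def averagedJacobian (DΦ : (n → ℝ) → Matrix m n ℝ) (a v : n → ℝ) :
    Matrix m n ℝ :=
  of fun i j => ∫ s in (0 : ℝ)..1, DΦ (a + s • v) i j

theorem Matrix.of_intervalIntegral_mulVec_apply {M : ℝ → Matrix m n ℝ} {a b : ℝ}
    (hM : ∀ i j, IntervalIntegrable (fun s => M s i j) MeasureTheory.volume a b)
    (v : n → ℝ) (i : m) :
    ((of fun i j => ∫ s in a..b, M s i j) *ᵥ v) i = ∫ s in a..b, (M s *ᵥ v) i := by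
  simp only [mulVec, dotProduct, of_apply]
  rw [intervalIntegral.integral_finsetSum fun j _ => (hM i j).mul_const (v j)]
  simp only [intervalIntegral.integral_mul_const]

theorem apply_add_eq_add_averagedJacobian_mulVec [Fintype m] {Φ : (n → ℝ) → m → ℝ}
    {DΦ : (n → ℝ) → Matrix m n ℝ}
    (hΦ : ∀ y, HasFDerivAt Φ (LinearMap.toContinuousLinearMap (DΦ y).mulVecLin) y)
    (hDΦ : Continuous DΦ) (a v : n → ℝ) :
    Φ (a + v) = Φ a + averagedJacobian DΦ a v *ᵥ v := by
  have hderiv : ∀ (i : m) (s : ℝ),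
      HasDerivAt (fun t : ℝ => Φ (a + t • v) i) ((DΦ (a + s • v) *ᵥ v) i) s := by
    intro i s
    have hline : HasDerivAt (fun t : ℝ => a + t • v) v s := by
      simpa using ((hasDerivAt_id s).smul_const v).const_add a
    exact hasDerivAt_pi.1 ((hΦ (a + s • v)).comp_hasDerivAt s hline) i
  have hentry : ∀ i j, Continuous fun s : ℝ => DΦ (a + s • v) i j := by fun_prop
  funext i
  have hint : IntervalIntegrable (fun s => (DΦ (a + s • v) *ᵥ v) i) MeasureTheory.volume 0 1 :=
    (by fun_prop : Continuous fun s : ℝ => (DΦ (a + s • v) *ᵥ v) i).intervalIntegrable 0 1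
  have hftc := intervalIntegral.integral_eq_sub_of_hasDerivAt (fun s _ => hderiv i s) hint
  rw [Pi.add_apply, averagedJacobian,
    of_intervalIntegral_mulVec_apply fun i j => (hentry i j).intervalIntegrable 0 1, hftc]
  simp

theorem koopman_dt_control_affine_general
    {nx nf nu : ℕ}
    (X : Set (Fin nx → ℝ))
    (U : Set (Fin nu → ℝ))
    (Φ : (Fin nx → ℝ) → (Fin nf → ℝ))
    (DΦ : (Fin nx → ℝ) → Matrix (Fin nf) (Fin nx) ℝ)
    (hΦ : ∀ x : Fin nx → ℝ,
      HasFDerivAt Φ (LinearMap.toContinuousLinearMap (DΦ x).mulVecLin) x)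
    (hDΦ : Continuous DΦ)
    (f : (Fin nx → ℝ) → (Fin nx → ℝ))
    (g : (Fin nx → ℝ) → Matrix (Fin nx) (Fin nu) ℝ)
    (A : Matrix (Fin nf) (Fin nf) ℝ)
    (hA : ∀ x ∈ X, Φ (f x) = A.mulVec (Φ x)) :
    ∀ x ∈ X, ∀ u ∈ U,
      Φ (f x + (g x).mulVec u) =
        A.mulVec (Φ x) +
          ((Matrix.of fun i j =>
            ∫ s in (0:ℝ)..1, DΦ (f x + s • (g x).mulVec u) i j) * g x).mulVec u := by
  intro x hx u _
  rw [apply_add_eq_add_averagedJacobian_mulVec hΦ hDΦ, hA x hx, ← mulVec_mulVec]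
  rfl

/-- Exact factorized lifted form of a discrete-time control-affine
system `x_{k+1} = f(x_k) + g(x_k) u_k` on a convex forward-invariant set `𝕏`
with Koopman-invariant observables: `Φ(f(x) + g(x)u) = A Φ(x) + B(x,u) u` where
`B(x,u) = (∫₀¹ (∂Φ/∂x)(f(x) + λ g(x)u) dλ) g(x)`; in the discrete-time case the
input matrix `B` also depends on the input `u`. -/
theorem koopman_dt_control_affine
    {nx nf nu : ℕ}
    (X : Set (Fin nx → ℝ)) (hX : Convex ℝ X)
    (U : Set (Fin nu → ℝ))
    (Φ : (Fin nx → ℝ) → (Fin nf → ℝ))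
    (DΦ : (Fin nx → ℝ) → Matrix (Fin nf) (Fin nx) ℝ)
    (hΦ : ∀ x : Fin nx → ℝ,
      HasFDerivAt Φ (LinearMap.toContinuousLinearMap (DΦ x).mulVecLin) x)
    (hDΦ : Continuous DΦ)
    (f : (Fin nx → ℝ) → (Fin nx → ℝ))
    (g : (Fin nx → ℝ) → Matrix (Fin nx) (Fin nu) ℝ)
    (hf : ∀ x ∈ X, f x ∈ X)
    (hfg : ∀ x ∈ X, ∀ u ∈ U, f x + (g x).mulVec u ∈ X)
    (A : Matrix (Fin nf) (Fin nf) ℝ)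
    (hA : ∀ x ∈ X, Φ (f x) = A.mulVec (Φ x)) :
    ∀ x ∈ X, ∀ u ∈ U,
      Φ (f x + (g x).mulVec u) =
        A.mulVec (Φ x) +
          ((Matrix.of fun i j =>
            ∫ s in (0:ℝ)..1, DΦ (f x + s • (g x).mulVec u) i j) * g x).mulVec u :=
  koopman_dt_control_affine_general X U Φ DΦ hΦ hDΦ f g A hA
end
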